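/- Let U be a uniformly convex Banach space and let Q ⊆ U be a nonempty bounded closed convex set. Let T : Q → Q be a map such that there are functions α_n : Q → (0, ∞) with α_n(q) → 1 as n → ∞ for each q ∈ Q (pointwise on Q), and such that for all p, q ∈ Q with ‖p − q‖ < r (r > 0 fixed) and every n ∈ ℕ, ‖Tⁿp − Tⁿq‖ ≤ α_n(q) ‖p − q‖. If there exists q₀ ∈ Q such that the asymptotic radius of the sequence (Tⁿq₀) relative to Q is strictly less than r, then T has a fixed point in Q. -/

import Mathlib

/-!
Uniform convexity makes the asymptotic centre of the orbit `xₙ = Tⁿ q₀` in `Q` unique, and more: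
points `y ∈ Q` with `limsup ‖xₙ - y‖` close to the asymptotic radius `R` are close to each other,
so such a centre `w` exists. As `R < r`, the orbit eventually stays within `r` of `w`, whence
`limsup ‖xₙ - Tᵏ w‖ ≤ αₖ(w) R → R`. Thus `Tᵏ w → w`, and `T`, continuous at `w` on `Q` by the
case `n = 1` of the hypothesis, fixes `w`.
-/

open Filter

/-- The asymptotic radius of a sequence `x` relative to a set `Q`:
`inf { limsup_n ‖x n − y‖ : y ∈ Q }`. -/
noncomputable def asymptoticRadius {U : Type*} [NormedAddCommGroup U]
    (Q : Set U) (x : ℕ → U) : ℝ :=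
  sInf ((fun y => limsup (fun n => ‖x n - y‖) atTop) '' Q)

open Bornology Topology Set Function

/-- Unlike `exists_forall_closed_ball_dist_add_le_two_mul_sub`, `δ` works for all radii `s ≤ C`. -/
theorem exists_forall_norm_add_le_two_sub_mul {E : Type*} [NormedAddCommGroup E]
    [NormedSpace ℝ E] [UniformConvexSpace E] {ε C : ℝ} (hε : 0 < ε) (hC : 0 < C) :
    ∃ δ, 0 < δ ∧ ∀ s ≤ C, ∀ ⦃a b : E⦄, ‖a‖ ≤ s → ‖b‖ ≤ s → ε ≤ ‖a - b‖ →
      ‖a + b‖ ≤ (2 - δ) * s := by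
  obtain ⟨δ, hδ, h⟩ := exists_forall_closed_ball_dist_add_le_two_sub E (div_pos hε hC)
  refine ⟨δ, hδ, fun s hsC a b ha hb hab => ?_⟩
  have hs : 0 < s := by
    by_contra! hs
    have := hab.trans ((norm_sub_le a b).trans (add_nonpos (ha.trans hs) (hb.trans hs)))
    linarith
  have hs' : 0 ≤ s⁻¹ := inv_nonneg.2 hs.le
  have hunit : ∀ {v : E}, ‖v‖ ≤ s → ‖s⁻¹ • v‖ ≤ 1 := fun hv => by
    rw [norm_smul_of_nonneg hs', inv_mul_le_iff₀ hs, mul_one]; exact hv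
  have hsep : ε / C ≤ ‖s⁻¹ • a - s⁻¹ • b‖ := by
    rw [← smul_sub, norm_smul_of_nonneg hs', inv_mul_eq_div]
    calc ε / C ≤ ε / s := by gcongr
      _ ≤ ‖a - b‖ / s := by gcongr
  have := h (hunit ha) (hunit hb) hsep
  rwa [← smul_add, norm_smul_of_nonneg hs', inv_mul_le_iff₀ hs, mul_comm] at this

section AsymptoticRadius

variable {U : Type*} [NormedAddCommGroup U]

noncomputable def asymptoticRadiusAt (x : ℕ → U) (y : U) : ℝ :=
  limsup (fun n => ‖x n - y‖) atTop

variable {x : ℕ → U}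

theorem isBoundedUnder_norm_sub (hx : IsBounded (range x)) (y : U) :
    IsBoundedUnder (· ≤ ·) atTop (fun n => ‖x n - y‖) := by
  obtain ⟨C, hC⟩ := hx.exists_norm_le
  exact isBoundedUnder_of ⟨C + ‖y‖, fun n => (norm_sub_le _ _).trans
    (by gcongr; exact hC _ (mem_range_self n))⟩

theorem isCoboundedUnder_norm_sub (x : ℕ → U) (y : U) :
    IsCoboundedUnder (· ≤ ·) atTop (fun n => ‖x n - y‖) :=
  isCoboundedUnder_le_of_le atTop fun _ => norm_nonneg _

theorem asymptoticRadiusAt_nonneg (hx : IsBounded (range x)) (y : U) :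
    0 ≤ asymptoticRadiusAt x y :=
  le_limsup_of_frequently_le (Frequently.of_forall fun _ => norm_nonneg _)
    (isBoundedUnder_norm_sub hx y)

theorem asymptoticRadiusAt_orbit_eq_iterate_comp (T : U → U) (q₀ : U) (k : ℕ) (y : U) :
    asymptoticRadiusAt (fun n => T^[n] q₀) y =
      asymptoticRadiusAt (T^[k] ∘ fun n => T^[n] q₀) y := by
  unfold asymptoticRadiusAt
  rw [← limsup_nat_add _ k]
  simp only [comp_apply, add_comm _ k, iterate_add_apply]

theorem lipschitzWith_asymptoticRadiusAt (hx : IsBounded (range x)) :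
    LipschitzWith 1 (asymptoticRadiusAt x) := by
  refine LipschitzWith.of_le_add fun z y => ?_
  calc asymptoticRadiusAt x z ≤ limsup (fun n => ‖x n - y‖ + dist z y) atTop :=
        limsup_le_limsup (Eventually.of_forall fun n => by
            simpa only [dist_eq_norm, norm_sub_rev z y] using
              norm_sub_le_norm_sub_add_norm_sub (x n) y z)
          (isCoboundedUnder_norm_sub x z)
          (isBoundedUnder_le_add (isBoundedUnder_norm_sub hx y) isBoundedUnder_const)
    _ = asymptoticRadiusAt x y + dist z y :=
        limsup_add_const atTop _ _ (isBoundedUnder_norm_sub hx y)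
          (isCoboundedUnder_norm_sub x y)

theorem norm_sub_le_asymptoticRadiusAt_add (hx : IsBounded (range x)) (y z : U) :
    ‖y - z‖ ≤ asymptoticRadiusAt x y + asymptoticRadiusAt x z := by
  have hy := isBoundedUnder_norm_sub hx y
  have hz := isBoundedUnder_norm_sub hx z
  calc ‖y - z‖ ≤ limsup (fun n => ‖x n - y‖ + ‖x n - z‖) atTop :=
        le_limsup_of_frequently_le (Frequently.of_forall fun n => by
            simpa only [norm_sub_rev y] using norm_sub_le_norm_sub_add_norm_sub y (x n) z)
          (isBoundedUnder_le_add hy hz)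
    _ ≤ asymptoticRadiusAt x y + asymptoticRadiusAt x z :=
        limsup_add_le (isBoundedUnder_of ⟨0, fun _ => norm_nonneg _⟩) hy
          (isCoboundedUnder_norm_sub x z) hz

theorem asymptoticRadiusAt_comp_le (hx : IsBounded (range x)) {S : U → U} {w : U}
    {ρ c : ℝ} (hc : 0 ≤ c) (hw : asymptoticRadiusAt x w < ρ)
    (hS : ∀ n, ‖x n - w‖ < ρ → ‖S (x n) - S w‖ ≤ c * ‖x n - w‖) :
    asymptoticRadiusAt (S ∘ x) (S w) ≤ c * asymptoticRadiusAt x w := by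
  have hb := isBoundedUnder_norm_sub hx w
  calc asymptoticRadiusAt (S ∘ x) (S w) ≤ limsup (fun n => c * ‖x n - w‖) atTop :=
        limsup_le_limsup ((eventually_lt_of_limsup_lt hw hb).mono hS)
          (isCoboundedUnder_norm_sub (S ∘ x) (S w))
          ((monotone_mul_left_of_nonneg hc).isBoundedUnder_le_comp hb)
    _ = c * asymptoticRadiusAt x w :=
        ((monotone_mul_left_of_nonneg hc).map_limsup_of_continuousAt _
          (continuous_const_mul c).continuousAt hb (isCoboundedUnder_norm_sub x w)).symm

theorem asymptoticRadius_eq_sInf (Q : Set U) (x : ℕ → U) :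
    asymptoticRadius Q x = sInf (asymptoticRadiusAt x '' Q) :=
  rfl

theorem asymptoticRadius_nonneg (hx : IsBounded (range x)) (Q : Set U) :
    0 ≤ asymptoticRadius Q x :=
  Real.sInf_nonneg (by rintro _ ⟨y, -, rfl⟩; exact asymptoticRadiusAt_nonneg hx y)

theorem bddBelow_image_asymptoticRadiusAt (hx : IsBounded (range x)) (Q : Set U) :
    BddBelow (asymptoticRadiusAt x '' Q) :=
  ⟨0, by rintro _ ⟨y, -, rfl⟩; exact asymptoticRadiusAt_nonneg hx y⟩

theorem asymptoticRadius_le (hx : IsBounded (range x)) {Q : Set U} {y : U}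
    (hy : y ∈ Q) : asymptoticRadius Q x ≤ asymptoticRadiusAt x y :=
  csInf_le (bddBelow_image_asymptoticRadiusAt hx Q) (mem_image_of_mem _ hy)

section UniformConvex

variable [NormedSpace ℝ U] [UniformConvexSpace U]

theorem exists_asymptoticRadiusAt_midpoint_le (hx : IsBounded (range x)) {ε C : ℝ}
    (hε : 0 < ε) (hC : 0 < C) :
    ∃ δ, 0 < δ ∧ ∀ s ≤ C, ∀ y z : U,
      asymptoticRadiusAt x y < s → asymptoticRadiusAt x z < s → ε ≤ ‖y - z‖ →
        asymptoticRadiusAt x (midpoint ℝ y z) ≤ (1 - δ / 2) * s := by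
  obtain ⟨δ, hδ, huc⟩ := exists_forall_norm_add_le_two_sub_mul (E := U) hε hC
  refine ⟨δ, hδ, fun s hsC y z hy hz hyz => limsup_le_of_le (isCoboundedUnder_norm_sub x _) ?_⟩
  filter_upwards [eventually_lt_of_limsup_lt hy (isBoundedUnder_norm_sub hx y),
    eventually_lt_of_limsup_lt hz (isBoundedUnder_norm_sub hx z)] with n hny hnz
  have hsplit : x n - midpoint ℝ y z = (2⁻¹ : ℝ) • ((x n - y) + (x n - z)) := by
    rw [midpoint_eq_smul_add, invOf_eq_inv]; module
  have := huc s hsC hny.le hnz.le (by rwa [sub_sub_sub_cancel_left, norm_sub_rev])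
  rw [hsplit, norm_smul_of_nonneg (by norm_num)]
  linarith

theorem exists_norm_sub_le_of_asymptoticRadiusAt_le (hx : IsBounded (range x))
    {Q : Set U} (hQ : Convex ℝ Q) {ε : ℝ} (hε : 0 < ε) :
    ∃ δ, 0 < δ ∧ ∀ y ∈ Q, ∀ z ∈ Q, asymptoticRadiusAt x y ≤ asymptoticRadius Q x + δ →
      asymptoticRadiusAt x z ≤ asymptoticRadius Q x + δ → ‖y - z‖ ≤ ε := by
  set R := asymptoticRadius Q x
  rcases (asymptoticRadius_nonneg hx Q).eq_or_lt with hR | hR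
  · refine ⟨ε / 4, by positivity, fun y _ z _ hy hz => ?_⟩
    have := norm_sub_le_asymptoticRadiusAt_add hx y z
    linarith
  obtain ⟨δ₀, hδ₀, hmid⟩ :=
    exists_asymptoticRadiusAt_midpoint_le hx hε (C := R + 2) (by linarith)
  -- small enough that `(1 - δ₀ / 2) * (R + 2 * δ) < R`: the midpoint would beat the infimum
  set δ := min 1 (δ₀ * R / 8)
  have hδ : 0 < δ := lt_min one_pos (by positivity)
  refine ⟨δ, hδ, fun y hyQ z hzQ hy hz => ?_⟩
  by_contra! hyz
  have hmid_le := hmid (R + 2 * δ) (by linarith [min_le_left 1 (δ₀ * R / 8)]) y z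
    (by linarith) (by linarith) hyz.le
  have := asymptoticRadius_le hx (hQ.midpoint_mem hyQ hzQ)
  nlinarith [min_le_right 1 (δ₀ * R / 8)]

theorem cauchySeq_of_tendsto_asymptoticRadiusAt (hx : IsBounded (range x))
    {Q : Set U} (hQ : Convex ℝ Q) {y : ℕ → U} (hyQ : ∀ k, y k ∈ Q)
    (hy : Tendsto (fun k => asymptoticRadiusAt x (y k)) atTop (𝓝 (asymptoticRadius Q x))) :
    CauchySeq y := by
  refine Metric.cauchySeq_iff'.2 fun ε hε => ?_
  obtain ⟨δ, hδ, hclose⟩ := exists_norm_sub_le_of_asymptoticRadiusAt_le hx hQ (half_pos hε)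
  obtain ⟨N, hN⟩ := eventually_atTop.1 (hy.eventually_le_const (lt_add_of_pos_right _ hδ))
  refine ⟨N, fun k hk => ?_⟩
  rw [dist_eq_norm]
  exact (hclose _ (hyQ k) _ (hyQ N) (hN k hk) (hN N le_rfl)).trans_lt (half_lt_self hε)

theorem tendsto_of_tendsto_asymptoticRadiusAt (hx : IsBounded (range x))
    {Q : Set U} (hQ : Convex ℝ Q) {y : ℕ → U} (hyQ : ∀ k, y k ∈ Q) {w : U} (hwQ : w ∈ Q)
    (hw : asymptoticRadiusAt x w = asymptoticRadius Q x)
    (hy : Tendsto (fun k => asymptoticRadiusAt x (y k)) atTop (𝓝 (asymptoticRadius Q x))) :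
    Tendsto y atTop (𝓝 w) := by
  refine Metric.tendsto_atTop.2 fun ε hε => ?_
  obtain ⟨δ, hδ, hclose⟩ := exists_norm_sub_le_of_asymptoticRadiusAt_le hx hQ (half_pos hε)
  obtain ⟨N, hN⟩ := eventually_atTop.1 (hy.eventually_le_const (lt_add_of_pos_right _ hδ))
  refine ⟨N, fun k hk => ?_⟩
  rw [dist_eq_norm]
  exact (hclose _ (hyQ k) _ hwQ (hN k hk) (by linarith)).trans_lt (half_lt_self hε)

theorem exists_asymptoticRadiusAt_eq [CompleteSpace U] (hx : IsBounded (range x))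
    {Q : Set U} (hQne : Q.Nonempty) (hQcl : IsClosed Q) (hQ : Convex ℝ Q) :
    ∃ w ∈ Q, asymptoticRadiusAt x w = asymptoticRadius Q x := by
  obtain ⟨u, -, hu, huQ⟩ := exists_seq_tendsto_sInf (hQne.image (asymptoticRadiusAt x))
    (bddBelow_image_asymptoticRadiusAt hx Q)
  choose y hyQ hyu using huQ
  have hy : Tendsto (fun k => asymptoticRadiusAt x (y k)) atTop (𝓝 (asymptoticRadius Q x)) := by
    simpa only [hyu, asymptoticRadius_eq_sInf] using hu
  obtain ⟨w, hw⟩ :=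
    cauchySeq_tendsto_of_complete (cauchySeq_of_tendsto_asymptoticRadiusAt hx hQ hyQ hy)
  exact ⟨w, hQcl.mem_of_tendsto hw (Eventually.of_forall hyQ),
    tendsto_nhds_unique (((lipschitzWith_asymptoticRadiusAt hx).continuous.tendsto w).comp hw) hy⟩

end UniformConvex

end AsymptoticRadius

theorem continuousWithinAt_of_norm_sub_le {E F : Type*} [SeminormedAddCommGroup E]
    [SeminormedAddCommGroup F] {f : E → F} {s : Set E} {w : E} {ρ c : ℝ} (hρ : 0 < ρ)
    (hf : ∀ p ∈ s, ‖p - w‖ < ρ → ‖f p - f w‖ ≤ c * ‖p - w‖) : ContinuousWithinAt f s w := by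
  have h0 : Tendsto (fun p => ‖p - w‖) (𝓝[s] w) (𝓝 0) :=
    tendsto_iff_norm_sub_tendsto_zero.1 (tendsto_nhdsWithin_of_tendsto_nhds tendsto_id)
  rw [ContinuousWithinAt, tendsto_iff_norm_sub_tendsto_zero]
  refine squeeze_zero' (Eventually.of_forall fun _ => norm_nonneg _) ?_
    (by simpa only [mul_zero] using h0.const_mul c)
  filter_upwards [self_mem_nhdsWithin, h0.eventually (gt_mem_nhds hρ)] with p hp hpw
  exact hf p hp hpw

theorem isFixedPt_of_tendsto_iterate_of_continuousWithinAt {α : Type*} [TopologicalSpace α]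
    [T2Space α] {f : α → α} {s : Set α} {x y : α} (hy : Tendsto (fun n => f^[n] x) atTop (𝓝 y))
    (hs : ∀ n, f^[n] x ∈ s) (hf : ContinuousWithinAt f s y) : IsFixedPt f y := by
  refine tendsto_nhds_unique ((tendsto_add_atTop_iff_nat 1).1 ?_) hy
  simp only [iterate_succ' f]
  exact hf.tendsto.comp (tendsto_nhdsWithin_iff.2 ⟨hy, Eventually.of_forall hs⟩)

theorem fixed_point_of_uniformly_local_pointwise_asymptotic_nonexpansive_general
    {U : Type*} [NormedAddCommGroup U] [NormedSpace ℝ U]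
    [CompleteSpace U] [UniformConvexSpace U]
    (Q : Set U) (hQbdd : Bornology.IsBounded Q)
    (hQcl : IsClosed Q) (hQconv : Convex ℝ Q)
    (T : U → U) (hT : Set.MapsTo T Q Q)
    (r : ℝ)
    (α : ℕ → U → ℝ)
    (hαlim : ∀ q ∈ Q, Tendsto (fun n => α n q) atTop (nhds 1))
    (hTloc : ∀ p ∈ Q, ∀ q ∈ Q, ‖p - q‖ < r →
      ∀ n : ℕ, ‖T^[n] p - T^[n] q‖ ≤ α n q * ‖p - q‖)
    (q₀ : U) (hq₀ : q₀ ∈ Q)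
    (hrad : asymptoticRadius Q (fun n => T^[n] q₀) < r) :
    ∃ w ∈ Q, T w = w := by
  set x : ℕ → U := fun n => T^[n] q₀
  have hxQ : ∀ n, x n ∈ Q := fun n => hT.iterate n hq₀
  have hx : IsBounded (range x) := hQbdd.subset (range_subset_iff.2 hxQ)
  obtain ⟨w, hwQ, hw⟩ := exists_asymptoticRadiusAt_eq hx ⟨q₀, hq₀⟩ hQcl hQconv
  have hwr : asymptoticRadiusAt x w < r := hw ▸ hrad
  have hiter : ∀ᶠ k in atTop,
      asymptoticRadiusAt x (T^[k] w) ≤ α k w * asymptoticRadius Q x := by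
    filter_upwards [(hαlim w hwQ).eventually_const_le zero_lt_one] with k hk
    rw [← hw, asymptoticRadiusAt_orbit_eq_iterate_comp T q₀ k]
    exact asymptoticRadiusAt_comp_le hx hk hwr fun n hn => hTloc _ (hxQ n) w hwQ hn k
  have hconv : Tendsto (fun k => T^[k] w) atTop (𝓝 w) :=
    tendsto_of_tendsto_asymptoticRadiusAt hx hQconv (fun k => hT.iterate k hwQ) hwQ hw
      (tendsto_of_tendsto_of_tendsto_of_le_of_le' tendsto_const_nhds
        (by simpa only [one_mul] using (hαlim w hwQ).mul_const (asymptoticRadius Q x))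
        (Eventually.of_forall fun k => asymptoticRadius_le hx (hT.iterate k hwQ)) hiter)
  have hTcont : ContinuousWithinAt T Q w :=
    continuousWithinAt_of_norm_sub_le ((asymptoticRadiusAt_nonneg hx w).trans_lt hwr)
      fun p hp hpw => hTloc p hp w hwQ hpw 1
  exact ⟨w, hwQ, isFixedPt_of_tendsto_iterate_of_continuousWithinAt hconv
    (fun k => hT.iterate k hwQ) hTcont⟩

theorem fixed_point_of_uniformly_local_pointwise_asymptotic_nonexpansive
    {U : Type*} [NormedAddCommGroup U] [NormedSpace ℝ U]
    [CompleteSpace U] [UniformConvexSpace U]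
    (Q : Set U) (hQne : Q.Nonempty) (hQbdd : Bornology.IsBounded Q)
    (hQcl : IsClosed Q) (hQconv : Convex ℝ Q)
    (T : U → U) (hT : Set.MapsTo T Q Q)
    (r : ℝ) (hr : 0 < r)
    (α : ℕ → U → ℝ) (hαpos : ∀ n, ∀ q ∈ Q, 0 < α n q)
    (hαlim : ∀ q ∈ Q, Tendsto (fun n => α n q) atTop (nhds 1))
    (hTloc : ∀ p ∈ Q, ∀ q ∈ Q, ‖p - q‖ < r →
      ∀ n : ℕ, ‖T^[n] p - T^[n] q‖ ≤ α n q * ‖p - q‖)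
    (q₀ : U) (hq₀ : q₀ ∈ Q)
    (hrad : asymptoticRadius Q (fun n => T^[n] q₀) < r) :
    ∃ w ∈ Q, T w = w :=
  fixed_point_of_uniformly_local_pointwise_asymptotic_nonexpansive_general Q hQbdd hQcl hQconv T hT
    r α hαlim hTloc q₀ hq₀ hrad
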